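/- Suppose (U'₁,U'₂,<') is the result of applying a case II coherent extended Nielsen transformation to a coherent extended word equation (U₁,U₂,<) whose cut graph G_{U₁,U₂,<} is acyclic. Then the sum over all (i,j) ∈ B'⁺ of the fecundities f_{U'₁,U'₂,<'}(i,j) is strictly less than f_{U₁,U₂,<}(2,1). -/

import Mathlib

open scoped Classical

namespace ExtWordEq

/-- The type of (candidate) boundary orders: relations on pairs (i,j). -/
abbrev BRel : Type := ℕ × ℕ → ℕ × ℕ → Prop

variable {X : Type*}

/-- The `i`-th side of the word equation (`i = 1` gives `U₁`, anything else `U₂`). -/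
def word (U₁ U₂ : List X) (i : ℕ) : List X := if i = 1 then U₁ else U₂

/-- The variable `U_{i,j}` (1-indexed), as an optional value. -/
def letter (U₁ U₂ : List X) (b : ℕ × ℕ) : Option X := (word U₁ U₂ b.1)[b.2 - 1]?

/-- `b` is a boundary of the word equation `(U₁, U₂)`. -/
def Boundary (U₁ U₂ : List X) (b : ℕ × ℕ) : Prop :=
  (b.1 = 1 ∨ b.1 = 2) ∧ 1 ≤ b.2 ∧ b.2 ≤ (word U₁ U₂ b.1).length

/-- `b` is a boundary of `(U₁, U₂)` or one of the conventional boundaries `(1,0)`, `(2,0)`. -/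
def EBoundary (U₁ U₂ : List X) (b : ℕ × ℕ) : Prop :=
  (b.1 = 1 ∨ b.1 = 2) ∧ b.2 ≤ (word U₁ U₂ b.1).length

/-- Incomparability `a ≈ b` for a strict order. -/
def Incomp (lt : BRel) (a b : ℕ × ℕ) : Prop := ¬ lt a b ∧ ¬ lt b a

/-- `lt` is a boundary order for the word equation `(U₁, U₂)`:
a strict weak order on the boundaries (together with the conventional boundaries
`(1,0) ≈ (2,0)`), extending `(i,j) < (i,j+1)` and with `(1,m) ≈ (2,n)`. -/
structure BoundaryOrder (U₁ U₂ : List X) (lt : BRel) : Prop where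
  irrefl : ∀ a, EBoundary U₁ U₂ a → ¬ lt a a
  trans : ∀ a b c, EBoundary U₁ U₂ a → EBoundary U₁ U₂ b → EBoundary U₁ U₂ c →
    lt a b → lt b c → lt a c
  incomp_trans : ∀ a b c, EBoundary U₁ U₂ a → EBoundary U₁ U₂ b → EBoundary U₁ U₂ c →
    Incomp lt a b → Incomp lt b c → Incomp lt a c
  succ : ∀ i j : ℕ, EBoundary U₁ U₂ (i, j + 1) → lt (i, j) (i, j + 1)
  top : Incomp lt (1, U₁.length) (2, U₂.length)
  bot : Incomp lt (1, 0) (2, 0)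

/-- `L(U_{i,1} U_{i,2} ⋯ U_{i,j})` where `L` is the additive extension of a length
assignment on variables. -/
def prefixLen (U₁ U₂ : List X) (L : X → ℕ) (b : ℕ × ℕ) : ℕ :=
  (((word U₁ U₂ b.1).take b.2).map L).sum

/-- The extended word equation `(U₁, U₂, lt)` is coherent. -/
def Coherent (U₁ U₂ : List X) (lt : BRel) : Prop :=
  ∃ L : X → ℕ, (∀ x, 0 < L x) ∧
    ∀ a b, Boundary U₁ U₂ a → Boundary U₁ U₂ b →
      (lt a b ↔ prefixLen U₁ U₂ L a < prefixLen U₁ U₂ L b)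

/-- The boundary `a` cuts the boundary `b`. -/
def Cuts (U₁ U₂ : List X) (lt : BRel) (a b : ℕ × ℕ) : Prop :=
  Boundary U₁ U₂ a ∧ Boundary U₁ U₂ b ∧ a ≠ b ∧
    lt (a.1, a.2 - 1) b ∧ lt (b.1, b.2 - 1) a

/-- The boundary `a` mirrors the boundary `b`. -/
def Mirrors (U₁ U₂ : List X) (lt : BRel) (a b : ℕ × ℕ) : Prop :=
  Boundary U₁ U₂ a ∧ Boundary U₁ U₂ b ∧ letter U₁ U₂ a = letter U₁ U₂ b ∧
    (¬ Incomp lt a b ∨ ¬ Incomp lt (a.1, a.2 - 1) (b.1, b.2 - 1))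

/-- Edge relation of the cut graph `G_{U₁,U₂,<}`. -/
def CutEdge (U₁ U₂ : List X) (lt : BRel) (a b : ℕ × ℕ) : Prop :=
  ∃ c, Cuts U₁ U₂ lt a c ∧ Mirrors U₁ U₂ lt c b

/-- `w 0, w 1, …, w n` is a cycle (of length `n ≥ 1`) in the cut graph. -/
def IsCycle (U₁ U₂ : List X) (lt : BRel) (n : ℕ) (w : ℕ → ℕ × ℕ) : Prop :=
  0 < n ∧ w n = w 0 ∧ ∀ k < n, CutEdge U₁ U₂ lt (w k) (w (k + 1))

/-- The cut graph `G_{U₁,U₂,<}` is acyclic. -/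
def Acyclic (U₁ U₂ : List X) (lt : BRel) : Prop :=
  ¬ ∃ n w, IsCycle U₁ U₂ lt n w

variable [DecidableEq X]

/-- Case I extended Nielsen transformation (here `x = U_{1,1}`, `y = U_{2,1}`,
and `T(y) = x`). -/
def NielsenI (U₁ U₂ : List X) (lt : BRel) (U₁' U₂' : List X) (lt' : BRel) : Prop :=
  ∃ x y : X, U₁.head? = some x ∧ U₂.head? = some y ∧
    Incomp lt (1, 1) (2, 1) ∧
    U₁' = (U₁.map fun z => if z = y then x else z).tail ∧
    U₂' = (U₂.map fun z => if z = y then x else z).tail ∧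
    BoundaryOrder U₁' U₂' lt' ∧
    ∀ a b : ℕ × ℕ, EBoundary U₁' U₂' a → EBoundary U₁' U₂' b →
      (lt' a b ↔ lt (a.1, a.2 + 1) (b.1, b.2 + 1))

/-- The substitution `T(x) = y x` (identity on other variables), applied to a word. -/
def expand (x y : X) (l : List X) : List X :=
  l.flatMap fun z => if z = x then [y, x] else [z]

/-- The map `μ(i,j) = j + #{j' ≤ j : U_{i,j'} = x} − 1` (as a map on boundaries),
where `x = U_{1,1}`. -/
def mu (U₁ U₂ : List X) (x : X) (b : ℕ × ℕ) : ℕ × ℕ :=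
  (b.1, b.2 + ((word U₁ U₂ b.1).take b.2).count x - 1)

/-- The map `ν(i,j) = j − #{j' ≤ j : U'_{i,j'} = x} + 1` (as a map on boundaries),
where `x = U_{1,1}`. -/
def nu (U₁' U₂' : List X) (x : X) (b : ℕ × ℕ) : ℕ × ℕ :=
  (b.1, b.2 - ((word U₁' U₂' b.1).take b.2).count x + 1)

/-- Membership in `B⁻ = B ∖ {(2,1)}`. -/
def Bminus (U₁ U₂ : List X) (b : ℕ × ℕ) : Prop := Boundary U₁ U₂ b ∧ b ≠ (2, 1)

/-- Membership in `B'⁻ = {(i, μ(i,j)) : (i,j) ∈ B⁻}` (`x = U_{1,1}`). -/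
def Bpminus (U₁ U₂ : List X) (x : X) (b' : ℕ × ℕ) : Prop :=
  ∃ b, Bminus U₁ U₂ b ∧ mu U₁ U₂ x b = b'

/-- Case II extended Nielsen transformation, with the heads `x = U_{1,1}`,
`y = U_{2,1}` made explicit. -/
def NielsenIIxy (U₁ U₂ : List X) (lt : BRel) (U₁' U₂' : List X) (lt' : BRel)
    (x y : X) : Prop :=
  U₁.head? = some x ∧ U₂.head? = some y ∧
  lt (2, 1) (1, 1) ∧
  U₁' = (expand x y U₁).tail ∧
  U₂' = (expand x y U₂).tail ∧
  BoundaryOrder U₁' U₂' lt' ∧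
  ∀ a b, Bpminus U₁ U₂ x a → Bpminus U₁ U₂ x b →
    (lt' a b ↔ lt (nu U₁' U₂' x a) (nu U₁' U₂' x b))

/-- Case II extended Nielsen transformation. -/
def NielsenII (U₁ U₂ : List X) (lt : BRel) (U₁' U₂' : List X) (lt' : BRel) : Prop :=
  ∃ x y : X, NielsenIIxy U₁ U₂ lt U₁' U₂' lt' x y

/-- The dual boundary order. -/
def dualRel (lt : BRel) : BRel := fun a b => lt (3 - a.1, a.2) (3 - b.1, b.2)

/-- Case III extended Nielsen transformation: case II applied to the dual,
then dualized back. -/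
def NielsenIII (U₁ U₂ : List X) (lt : BRel) (U₁' U₂' : List X) (lt' : BRel) : Prop :=
  NielsenII U₂ U₁ (dualRel lt) U₂' U₁' (dualRel lt')

/-- `(U₁', U₂', lt')` is an extended Nielsen transformation of the nontrivial coherent
extended word equation `(U₁, U₂, lt)`. -/
def ExtNielsen (U₁ U₂ : List X) (lt : BRel) (U₁' U₂' : List X) (lt' : BRel) : Prop :=
  U₁ ≠ [] ∧ U₂ ≠ [] ∧ BoundaryOrder U₁ U₂ lt ∧ Coherent U₁ U₂ lt ∧
    (NielsenI U₁ U₂ lt U₁' U₂' lt' ∨ NielsenII U₁ U₂ lt U₁' U₂' lt' ∨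
      NielsenIII U₁ U₂ lt U₁' U₂' lt')

/-- A coherent extended Nielsen transformation. -/
def CohNielsen (U₁ U₂ : List X) (lt : BRel) (U₁' U₂' : List X) (lt' : BRel) : Prop :=
  ExtNielsen U₁ U₂ lt U₁' U₂' lt' ∧ Coherent U₁' U₂' lt'

/-- `(U₁, U₂, lt)` is (strongly) terminating: there is no infinite sequence of coherent
extended Nielsen transformations starting from it. -/
def Terminating (U₁ U₂ : List X) (lt : BRel) : Prop :=
  ¬ ∃ f : ℕ → List X × List X × BRel,
    f 0 = (U₁, U₂, lt) ∧
    ∀ n, CohNielsen (f n).1 (f n).2.1 (f n).2.2 (f (n + 1)).1 (f (n + 1)).2.1 (f (n + 1)).2.2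


/-- The finite set of boundaries of `(U₁, U₂)`. -/
def boundaryFinset (U₁ U₂ : List X) : Finset (ℕ × ℕ) :=
  ((Finset.range U₁.length).image fun j => (1, j + 1)) ∪
    ((Finset.range U₂.length).image fun j => (2, j + 1))

/-- `f` is the fecundity function of `(U₁, U₂, lt)`: on every boundary `b`,
`f b = 1 + max over boundaries c cut by b of (sum over boundaries d mirrored by c of f d)`. -/
def IsFecundity (U₁ U₂ : List X) (lt : BRel) (f : ℕ × ℕ → ℕ) : Prop :=
  ∀ b ∈ boundaryFinset U₁ U₂,
    f b = 1 + ((boundaryFinset U₁ U₂).filter fun c => Cuts U₁ U₂ lt b c).sup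
      fun c => ((boundaryFinset U₁ U₂).filter fun d => Mirrors U₁ U₂ lt c d).sum f

end ExtWordEq

namespace ExtWordEq

/-!
The new boundaries are the images `μ b` of the old boundaries `b ≠ (2,1)`, together with, for
each occurrence `d ≠ (1,1)` of `x = U_{1,1}`, the boundary right after the `y` that `T` inserts
in front of `d`; `ν` sends them back to `b` and `d`. Realizing `<` and `<'` by length assignments
turns cuts and mirrors into statements about prefix lengths, and the matching of the orders
through `ν` shows that `ν` maps cuts to cuts and mirrors to mirrors, except for mirrors carrying
`y`. Those are absorbed because `(1,1)` and `(2,1)` cut each other, `(1,1)` mirrors every later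
occurrence of `x` and `(2,1)` every other occurrence of `y`. Induction on `f'` then gives
`f' b' ≤ f (ν b')`. Finally `ν` maps `B'⁺` injectively to later occurrences of `x`, all mirrored
by `(1,1)`, which `(2,1)` cuts, so the sum over `B'⁺` is less than `f (2,1)`.
-/

variable {X : Type*}

lemma sum_le_sum_of_subset_erase_union {ι M : Type*} [DecidableEq ι] [AddCommMonoid M]
    [PartialOrder M] [IsOrderedAddMonoid M] [CanonicallyOrderedAdd M] {s t u : Finset ι} {a : ι}
    {f : ι → M} (h : s ⊆ t.erase a ∪ u) (ha : a ∈ t) (hu : u.sum f ≤ f a) :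
    s.sum f ≤ t.sum f :=
  calc s.sum f ≤ (t.erase a ∪ u).sum f := Finset.sum_le_sum_of_subset h
    _ ≤ (t.erase a).sum f + u.sum f := by
      rw [← Finset.sum_union_inter]; exact le_self_add
    _ ≤ (t.erase a).sum f + f a := add_le_add_right hu _
    _ = t.sum f := by rw [add_comm, Finset.add_sum_erase _ _ ha]

section Expand

variable [DecidableEq X] {x y a : X} {l : List X} {j k : ℕ}

/-- The length of `expand x y (l.take j)` when `j ≤ l.length`: the image of the `j`-th letter
of `l` ends there in `expand x y l`. -/
def expandPos (x : X) (l : List X) (j : ℕ) : ℕ := j + (l.take j).count x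

@[simp] lemma expandPos_zero : expandPos x l 0 = 0 := by simp [expandPos]

lemma expand_append (s t : List X) :
    expand x y (s ++ t) = expand x y s ++ expand x y t :=
  List.flatMap_append

lemma expand_singleton (a : X) : expand x y [a] = if a = x then [y, x] else [a] := by
  simp [expand]

lemma length_expand (l : List X) : (expand x y l).length = l.length + l.count x := by
  induction l with
  | nil => rfl
  | cons b t ih =>
    rw [← List.singleton_append, expand_append, List.length_append, ih, expand_singleton]
    by_cases h : b = x <;> simp [h] <;> omega

lemma head?_expand_cons (ha : a = x ∨ a = y) (t : List X) :
    (expand x y (a :: t)).head? = some y := by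
  rw [← List.singleton_append, expand_append, expand_singleton]
  rcases ha with rfl | rfl <;> split_ifs <;> simp_all

lemma count_expand (hyx : y ≠ x) (l : List X) : (expand x y l).count x = l.count x := by
  induction l with
  | nil => rfl
  | cons b t ih =>
    rw [← List.singleton_append, expand_append, List.count_append, ih, expand_singleton]
    by_cases h : b = x <;> simp [h, hyx, add_comm]

lemma length_expand_take (hj : j ≤ l.length) :
    (expand x y (l.take j)).length = expandPos x l j := by
  rw [length_expand, expandPos, List.length_take, min_eq_left hj]

lemma expandPos_strictMono : StrictMono (expandPos x l) := by
  refine strictMono_nat_of_lt_succ fun j => ?_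
  have := (List.take_prefix_take_left (l := l) (Nat.le_add_right j 1)).count_le x
  unfold expandPos; omega

lemma expandPos_succ (h : l[j]? = some a) :
    expandPos x l (j + 1) = expandPos x l j + if a = x then 2 else 1 := by
  simp only [expandPos, List.take_add_one, h, Option.toList_some, List.count_append,
    List.count_singleton]
  split <;> simp_all <;> omega

lemma expandPos_length : expandPos x l l.length = (expand x y l).length := by
  rw [expandPos, length_expand, List.take_length]

lemma take_expand_expandPos (hj : j ≤ l.length) :
    (expand x y l).take (expandPos x l j) = expand x y (l.take j) := by
  rw [← length_expand_take (y := y) hj, ← List.take_append_drop j l, expand_append,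
    List.take_append_drop, List.take_left' rfl]

lemma expand_eq_of_getElem? (h : l[j]? = some a) :
    expand x y l = expand x y (l.take j) ++ (expand x y [a] ++ expand x y (l.drop (j + 1))) := by
  obtain ⟨hj, rfl⟩ := List.getElem?_eq_some_iff.mp h
  conv_lhs => rw [← List.take_append_drop j l, List.drop_eq_getElem_cons hj]
  rw [expand_append, ← List.singleton_append, expand_append]

lemma take_expand_expandPos_add (h : l[j]? = some a) (hk : k ≤ (expand x y [a]).length) :
    (expand x y l).take (expandPos x l j + k) =
      expand x y (l.take j) ++ (expand x y [a]).take k := by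
  have hj := (List.getElem?_eq_some_iff.mp h).1.le
  rw [expand_eq_of_getElem? h, ← length_expand_take (y := y) hj, List.take_length_add_append,
    List.take_append_of_le_length hk]

lemma getElem?_expand_expandPos_add (h : l[j]? = some a) (hk : k < (expand x y [a]).length) :
    (expand x y l)[expandPos x l j + k]? = (expand x y [a])[k]? := by
  have hj := (List.getElem?_eq_some_iff.mp h).1.le
  rw [expand_eq_of_getElem? h, ← length_expand_take (y := y) hj,
    List.getElem?_append_right (by omega),
    List.getElem?_append_left (by omega), Nat.add_sub_cancel_left]

lemma getElem?_expand_expandPos_succ_sub_one (h : l[j]? = some a) :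
    (expand x y l)[expandPos x l (j + 1) - 1]? = some a := by
  rw [expandPos_succ h]
  by_cases ha : a = x
  · simpa [ha, expand_singleton] using getElem?_expand_expandPos_add (x := x) (y := y) (k := 1) h
      (by simp [ha, expand_singleton])
  · simpa [ha, expand_singleton] using getElem?_expand_expandPos_add (x := x) (y := y) (k := 0) h
      (by simp [ha, expand_singleton])

lemma getElem?_expand_expandPos (h : l[j]? = some x) :
    (expand x y l)[expandPos x l j]? = some y := by
  simpa [expand_singleton] using getElem?_expand_expandPos_add (x := x) (y := y) (k := 0) h
    (by simp [expand_singleton])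

lemma exists_expandPos_lt_le (h0 : 0 < k) (hk : k ≤ (expand x y l).length) :
    ∃ j < l.length, expandPos x l j < k ∧ k ≤ expandPos x l (j + 1) := by
  have hex : ∃ n, k ≤ expandPos x l n := ⟨l.length, by rwa [expandPos_length (y := y)]⟩
  have h0' : Nat.find hex ≠ 0 := fun h => by
    have := Nat.find_spec hex
    rw [h, expandPos_zero] at this
    omega
  refine ⟨Nat.find hex - 1, ?_, ?_, ?_⟩
  · have := Nat.find_min' hex (show k ≤ expandPos x l l.length by rwa [expandPos_length (y := y)])
    omega
  · exact not_le.mp (Nat.find_min hex (by omega))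
  · rw [Nat.sub_add_cancel (Nat.pos_of_ne_zero h0')]; exact Nat.find_spec hex

end Expand

section Boundaries

variable {U₁ U₂ : List X} {lt : BRel} {L : X → ℕ} {a b c d : ℕ × ℕ} {i j k : ℕ} {z : X}

def pred (b : ℕ × ℕ) : ℕ × ℕ := (b.1, b.2 - 1)

lemma mem_boundaryFinset : b ∈ boundaryFinset U₁ U₂ ↔ Boundary U₁ U₂ b := by
  obtain ⟨i, j⟩ := b
  simp only [boundaryFinset, Finset.mem_union, Finset.mem_image, Finset.mem_range, Prod.mk.injEq,
    Boundary, word]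
  constructor
  · rintro (⟨k, hk, rfl, rfl⟩ | ⟨k, hk, rfl, rfl⟩) <;> simp <;> omega
  · rintro ⟨rfl | rfl, h₁, h₂⟩ <;> simp at h₂
    · exact Or.inl ⟨j - 1, by omega, rfl, by omega⟩
    · exact Or.inr ⟨j - 1, by omega, rfl, by omega⟩

lemma EBoundary.of_le (hb : EBoundary U₁ U₂ (i, k)) (hjk : j ≤ k) : EBoundary U₁ U₂ (i, j) :=
  ⟨hb.1, hjk.trans hb.2⟩

lemma Boundary.eBoundary (hb : Boundary U₁ U₂ b) : EBoundary U₁ U₂ b := ⟨hb.1, hb.2.2⟩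

lemma Boundary.eBoundary_pred (hb : Boundary U₁ U₂ b) : EBoundary U₁ U₂ (pred b) :=
  ⟨hb.1, hb.2.2.trans' (Nat.sub_le _ _)⟩

lemma Boundary.boundary_pred_or (hb : Boundary U₁ U₂ b) :
    Boundary U₁ U₂ (pred b) ∨ (pred b).2 = 0 := by
  obtain ⟨h₁, h₂, h₃⟩ := hb
  by_cases h : b.2 = 1
  · exact Or.inr (by simp [pred, h])
  · exact Or.inl ⟨h₁, by simp only [pred]; omega, by simp only [pred]; omega⟩

lemma letter_eq_some (hb : Boundary U₁ U₂ b) : ∃ z, letter U₁ U₂ b = some z :=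
  ⟨_, List.getElem?_eq_getElem (by have := hb.2; omega)⟩

lemma letter_succ (U₁ U₂ : List X) (i j : ℕ) : letter U₁ U₂ (i, j + 1) = (word U₁ U₂ i)[j]? := rfl

lemma boundary_one (hi : i = 1 ∨ i = 2) (hz : letter U₁ U₂ (i, 1) = some z) :
    Boundary U₁ U₂ (i, 1) :=
  ⟨hi, le_rfl, (List.getElem?_eq_some_iff.1 hz).1⟩

lemma prefixLen_zero (i : ℕ) : prefixLen U₁ U₂ L (i, 0) = 0 := by
  simp [prefixLen]

lemma prefixLen_mono (h₁ : a.1 = b.1) (h₂ : a.2 ≤ b.2) :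
    prefixLen U₁ U₂ L a ≤ prefixLen U₁ U₂ L b := by
  unfold prefixLen
  rw [h₁]
  exact ((List.take_prefix_take_left h₂).map L).sublist.sum_le_sum fun _ _ => Nat.zero_le _

lemma prefixLen_eq_pred_add (hb : 1 ≤ b.2) (hz : letter U₁ U₂ b = some z) :
    prefixLen U₁ U₂ L b = prefixLen U₁ U₂ L (pred b) + L z := by
  obtain ⟨i, j⟩ := b
  obtain ⟨j, rfl⟩ : ∃ j', j = j' + 1 := ⟨j - 1, by simp only at hb; omega⟩
  simp only [letter, Nat.add_sub_cancel] at hz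
  simp [prefixLen, pred, List.take_add_one, hz]

lemma prefixLen_one (hz : letter U₁ U₂ (i, 1) = some z) : prefixLen U₁ U₂ L (i, 1) = L z := by
  rw [prefixLen_eq_pred_add le_rfl hz]
  simp [pred, prefixLen_zero]

lemma prefixLen_pos (hL : ∀ z, 0 < L z) (hb : Boundary U₁ U₂ b) : 0 < prefixLen U₁ U₂ L b := by
  obtain ⟨z, hz⟩ := letter_eq_some hb
  rw [prefixLen_eq_pred_add hb.2.1 hz]
  exact Nat.add_pos_right _ (hL z)

lemma Cuts.symm (h : Cuts U₁ U₂ lt a b) : Cuts U₁ U₂ lt b a :=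
  ⟨h.2.1, h.1, h.2.2.1.symm, h.2.2.2.2, h.2.2.2.1⟩

lemma Mirrors.symm (h : Mirrors U₁ U₂ lt a b) : Mirrors U₁ U₂ lt b a :=
  ⟨h.2.1, h.1, h.2.2.1.symm, h.2.2.2.imp (mt fun h => ⟨h.2, h.1⟩) (mt fun h => ⟨h.2, h.1⟩)⟩

namespace BoundaryOrder

variable (hbo : BoundaryOrder U₁ U₂ lt)
include hbo

lemma lt_of_snd_lt (hk : EBoundary U₁ U₂ (i, k)) (hjk : j < k) : lt (i, j) (i, k) := by
  induction k with
  | zero => omega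
  | succ k ih =>
    have hs := hbo.succ i k hk
    rcases Nat.lt_succ_iff_lt_or_eq.mp hjk with h | rfl
    · exact hbo.trans _ _ _ (hk.of_le (by omega)) (hk.of_le (by omega)) hk
        (ih (hk.of_le (by omega)) h) hs
    · exact hs

lemma not_lt_zero_zero {i' : ℕ} (hi : i = 1 ∨ i = 2) (hi' : i' = 1 ∨ i' = 2) :
    ¬ lt (i, 0) (i', 0) := by
  rcases hi with rfl | rfl <;> rcases hi' with rfl | rfl
  exacts [hbo.irrefl _ ⟨Or.inl rfl, Nat.zero_le _⟩, hbo.bot.1, hbo.bot.2,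
    hbo.irrefl _ ⟨Or.inr rfl, Nat.zero_le _⟩]

lemma zero_lt (hi : i = 1 ∨ i = 2) (hc : Boundary U₁ U₂ c) : lt (i, 0) c := by
  have hc₀ : lt (c.1, 0) c := hbo.lt_of_snd_lt hc.eBoundary hc.2.1
  by_contra h
  have h' : ¬ lt c (i, 0) := fun h' =>
    hbo.not_lt_zero_zero hc.1 hi (hbo.trans _ _ _ ⟨hc.1, Nat.zero_le _⟩ hc.eBoundary
      ⟨hi, Nat.zero_le _⟩ hc₀ h')
  have := hbo.incomp_trans (c.1, 0) (i, 0) c ⟨hc.1, Nat.zero_le _⟩ ⟨hi, Nat.zero_le _⟩ hc.eBoundary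
    ⟨hbo.not_lt_zero_zero hc.1 hi, hbo.not_lt_zero_zero hi hc.1⟩ ⟨h, h'⟩
  exact this.1 hc₀

lemma not_lt_zero (hi : i = 1 ∨ i = 2) (hc : EBoundary U₁ U₂ c) : ¬ lt c (i, 0) := by
  intro h
  obtain ⟨i', j'⟩ := c
  rcases Nat.eq_zero_or_pos j' with rfl | hj
  · exact hbo.not_lt_zero_zero hc.1 hi h
  · exact hbo.not_lt_zero_zero hc.1 hi (hbo.trans _ _ _ ⟨hc.1, Nat.zero_le _⟩ hc ⟨hi, Nat.zero_le _⟩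
      (hbo.zero_lt hc.1 ⟨hc.1, hj, hc.2⟩) h)

end BoundaryOrder

/-- Coherence with the witness `L`, extended to the conventional boundaries `(1,0)`, `(2,0)`. -/
def IsRealizedBy (U₁ U₂ : List X) (lt : BRel) (L : X → ℕ) : Prop :=
  ∀ a b, EBoundary U₁ U₂ a → EBoundary U₁ U₂ b →
    (lt a b ↔ prefixLen U₁ U₂ L a < prefixLen U₁ U₂ L b)

lemma BoundaryOrder.exists_isRealizedBy (hbo : BoundaryOrder U₁ U₂ lt)
    (hcoh : Coherent U₁ U₂ lt) : ∃ L : X → ℕ, (∀ z, 0 < L z) ∧ IsRealizedBy U₁ U₂ lt L := by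
  obtain ⟨L, hL, hco⟩ := hcoh
  refine ⟨L, hL, ?_⟩
  rintro ⟨i, j⟩ ⟨i', j'⟩ ha hb
  rcases Nat.eq_zero_or_pos j with rfl | hj <;> rcases Nat.eq_zero_or_pos j' with rfl | hj'
  · simpa [prefixLen_zero] using hbo.not_lt_zero hb.1 ha
  · simpa [prefixLen_zero, prefixLen_pos hL ⟨hb.1, hj', hb.2⟩] using
      hbo.zero_lt ha.1 ⟨hb.1, hj', hb.2⟩
  · simpa [prefixLen_zero] using hbo.not_lt_zero hb.1 ha
  · exact hco _ _ ⟨ha.1, hj, ha.2⟩ ⟨hb.1, hj', hb.2⟩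

namespace IsRealizedBy

variable (h : IsRealizedBy U₁ U₂ lt L)
include h

lemma incomp_iff (ha : EBoundary U₁ U₂ a) (hb : EBoundary U₁ U₂ b) :
    Incomp lt a b ↔ prefixLen U₁ U₂ L a = prefixLen U₁ U₂ L b := by
  rw [Incomp, h a b ha hb, h b a hb ha]
  omega

lemma cuts_iff : Cuts U₁ U₂ lt a b ↔ Boundary U₁ U₂ a ∧ Boundary U₁ U₂ b ∧ a ≠ b ∧
    prefixLen U₁ U₂ L (pred a) < prefixLen U₁ U₂ L b ∧
    prefixLen U₁ U₂ L (pred b) < prefixLen U₁ U₂ L a := by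
  constructor
  · rintro ⟨ha, hb, hne, h₁, h₂⟩
    exact ⟨ha, hb, hne, (h _ _ ha.eBoundary_pred hb.eBoundary).1 h₁,
      (h _ _ hb.eBoundary_pred ha.eBoundary).1 h₂⟩
  · rintro ⟨ha, hb, hne, h₁, h₂⟩
    exact ⟨ha, hb, hne, (h _ _ ha.eBoundary_pred hb.eBoundary).2 h₁,
      (h _ _ hb.eBoundary_pred ha.eBoundary).2 h₂⟩

lemma mirrors_iff : Mirrors U₁ U₂ lt a b ↔ Boundary U₁ U₂ a ∧ Boundary U₁ U₂ b ∧
    letter U₁ U₂ a = letter U₁ U₂ b ∧ prefixLen U₁ U₂ L a ≠ prefixLen U₁ U₂ L b := by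
  constructor
  · rintro ⟨ha, hb, hl, hne⟩
    refine ⟨ha, hb, hl, ?_⟩
    obtain ⟨z, hz⟩ := letter_eq_some ha
    have ea := prefixLen_eq_pred_add (L := L) ha.2.1 hz
    have eb := prefixLen_eq_pred_add (L := L) hb.2.1 (hl ▸ hz)
    change ¬ Incomp lt a b ∨ ¬ Incomp lt (pred a) (pred b) at hne
    rw [h.incomp_iff ha.eBoundary hb.eBoundary, h.incomp_iff ha.eBoundary_pred hb.eBoundary_pred]
      at hne
    omega
  · rintro ⟨ha, hb, hl, hne⟩
    exact ⟨ha, hb, hl, Or.inl ((h.incomp_iff ha.eBoundary hb.eBoundary).not.2 hne)⟩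

end IsRealizedBy

noncomputable def cutSet (U₁ U₂ : List X) (lt : BRel) (b : ℕ × ℕ) : Finset (ℕ × ℕ) :=
  (boundaryFinset U₁ U₂).filter fun c => Cuts U₁ U₂ lt b c

noncomputable def mirrorSet (U₁ U₂ : List X) (lt : BRel) (c : ℕ × ℕ) : Finset (ℕ × ℕ) :=
  (boundaryFinset U₁ U₂).filter fun d => Mirrors U₁ U₂ lt c d

lemma mem_cutSet : c ∈ cutSet U₁ U₂ lt b ↔ Cuts U₁ U₂ lt b c := by
  simpa [cutSet, mem_boundaryFinset] using fun h : Cuts U₁ U₂ lt b c => h.2.1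

lemma mem_mirrorSet : d ∈ mirrorSet U₁ U₂ lt c ↔ Mirrors U₁ U₂ lt c d := by
  simpa [mirrorSet, mem_boundaryFinset] using fun h : Mirrors U₁ U₂ lt c d => h.2.1

namespace IsFecundity

variable {f : ℕ × ℕ → ℕ} (hf : IsFecundity U₁ U₂ lt f)
include hf

lemma eq (hb : Boundary U₁ U₂ b) :
    f b = 1 + (cutSet U₁ U₂ lt b).sup fun c => (mirrorSet U₁ U₂ lt c).sum f :=
  hf b (mem_boundaryFinset.2 hb)

lemma sum_mirrorSet_lt (h : Cuts U₁ U₂ lt b c) : (mirrorSet U₁ U₂ lt c).sum f < f b := by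
  rw [hf.eq h.1]
  have := Finset.le_sup (f := fun c => (mirrorSet U₁ U₂ lt c).sum f) (mem_cutSet.2 h)
  omega

end IsFecundity

end Boundaries

section NielsenIIWords

variable [DecidableEq X] {U₁ U₂ U₁' U₂' : List X} {x y : X} {b b' c' d : ℕ × ℕ} {i m : ℕ}

def IsLaterOcc (U₁ U₂ : List X) (x : X) (d : ℕ × ℕ) : Prop :=
  Boundary U₁ U₂ d ∧ letter U₁ U₂ d = some x ∧ d ≠ (1, 1)

/-- The words of a case II transformation. As `T(U₁) = y x ⋯` and `T(U₂) = y ⋯` both begin with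
`y`, the new sides `U'ᵢ = T(Uᵢ)⁺` are described uniformly by `T(Uᵢ) = y :: U'ᵢ`. -/
structure NielsenIIWords (U₁ U₂ U₁' U₂' : List X) (x y : X) : Prop where
  ne : y ≠ x
  letter_one_one : letter U₁ U₂ (1, 1) = some x
  letter_two_one : letter U₁ U₂ (2, 1) = some y
  expand_word : ∀ i, expand x y (word U₁ U₂ i) = y :: word U₁' U₂' i

lemma fst_mu : (mu U₁ U₂ x b).1 = b.1 := rfl

lemma snd_mu : (mu U₁ U₂ x b).2 = expandPos x (word U₁ U₂ b.1) b.2 - 1 := rfl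

lemma snd_pred_mu_of_getElem? {j : ℕ} (hx : (word U₁ U₂ i)[j]? = some x) :
    (pred (mu U₁ U₂ x (i, j + 1))).2 = expandPos x (word U₁ U₂ i) j := by
  simp only [pred, mu]
  rw [← expandPos, expandPos_succ hx, if_pos rfl]
  omega

namespace NielsenIIWords

variable (W : NielsenIIWords U₁ U₂ U₁' U₂' x y)
include W

lemma boundary_one_one : Boundary U₁ U₂ (1, 1) := boundary_one (Or.inl rfl) W.letter_one_one

lemma boundary_two_one : Boundary U₁ U₂ (2, 1) := boundary_one (Or.inr rfl) W.letter_two_one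

lemma letter_new (hm : 1 ≤ m) : letter U₁' U₂' (i, m) = (expand x y (word U₁ U₂ i))[m]? := by
  obtain ⟨m, rfl⟩ : ∃ m', m = m' + 1 := ⟨m - 1, by omega⟩
  rw [letter_succ, W.expand_word, List.getElem?_cons_succ]

lemma length_new (i : ℕ) :
    (word U₁' U₂' i).length + 1 = expandPos x (word U₁ U₂ i) (word U₁ U₂ i).length := by
  rw [expandPos_length (y := y), W.expand_word, List.length_cons]

lemma snd_nu (b' : ℕ × ℕ) : (nu U₁' U₂' x b').2 =
    b'.2 - ((expand x y (word U₁ U₂ b'.1)).take (b'.2 + 1)).count x + 1 := by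
  rw [W.expand_word, List.take_succ_cons, List.count_cons_of_ne W.ne]
  rfl

lemma two_le_of_isLaterOcc (hd : IsLaterOcc U₁ U₂ x d) : 2 ≤ d.2 := by
  obtain ⟨⟨hi, hj, -⟩, hx, hne⟩ := hd
  by_contra h
  obtain ⟨i, j⟩ := d
  simp only at hi hj h
  obtain rfl : j = 1 := by omega
  rcases hi with rfl | rfl
  · exact hne rfl
  · exact W.ne (Option.some_injective _ (W.letter_two_one.symm.trans hx))

lemma bminus_of_isLaterOcc (hd : IsLaterOcc U₁ U₂ x d) : Bminus U₁ U₂ d :=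
  ⟨hd.1, by have := W.two_le_of_isLaterOcc hd; rintro rfl; simp at this⟩

lemma two_le_expandPos (hb : Bminus U₁ U₂ b) : 2 ≤ expandPos x (word U₁ U₂ b.1) b.2 := by
  obtain ⟨⟨h₁, h₂, -⟩, hne⟩ := hb
  obtain ⟨i, j⟩ := b
  by_cases hj : j = 1
  · subst hj
    obtain rfl : i = 1 := by simp only at h₁; rcases h₁ with rfl | rfl <;> simp_all
    have := expandPos_succ (x := x) (l := word U₁ U₂ 1) (j := 0) W.letter_one_one
    rw [this, if_pos rfl]; rfl
  · simp only [expandPos] at h₂ ⊢; omega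

lemma nu_mu (hb : Boundary U₁ U₂ b) : nu U₁' U₂' x (mu U₁ U₂ x b) = b := by
  obtain ⟨i, j⟩ := b
  obtain ⟨-, hj₁, hj₂⟩ := hb
  simp only at hj₁ hj₂
  have hpos : 1 ≤ expandPos x (word U₁ U₂ i) j := hj₁.trans (Nat.le_add_right _ _)
  refine Prod.ext rfl ?_
  rw [W.snd_nu]
  simp only [mu]
  rw [← expandPos, Nat.sub_add_cancel hpos, take_expand_expandPos hj₂, count_expand W.ne]
  simp only [expandPos]
  omega

lemma nu_pred_mu (hd : IsLaterOcc U₁ U₂ x d) : nu U₁' U₂' x (pred (mu U₁ U₂ x d)) = d := by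
  obtain ⟨i, j⟩ := d
  obtain ⟨j, rfl⟩ : ∃ j', j = j' + 1 := ⟨j - 1, by have := hd.1.2.1; simp only at this; omega⟩
  have hx : (word U₁ U₂ i)[j]? = some x := hd.2.1
  refine Prod.ext rfl ?_
  rw [W.snd_nu, snd_pred_mu_of_getElem? hx]
  change expandPos x (word U₁ U₂ i) j - List.count x
    (List.take (expandPos x (word U₁ U₂ i) j + 1) (expand x y (word U₁ U₂ i))) + 1 = j + 1
  rw [take_expand_expandPos_add hx (by simp [expand_singleton]), List.count_append,
    count_expand W.ne]
  simp [expand_singleton, W.ne, expandPos]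

lemma boundary_mu (hb : Bminus U₁ U₂ b) : Boundary U₁' U₂' (mu U₁ U₂ x b) := by
  have h₂ := W.two_le_expandPos hb
  have hmono := (expandPos_strictMono (x := x) (l := word U₁ U₂ b.1)).monotone hb.1.2.2
  have hlen := W.length_new b.1
  exact ⟨hb.1.1, by rw [snd_mu]; omega, by rw [snd_mu, fst_mu]; omega⟩

lemma letter_mu (hb : Bminus U₁ U₂ b) : letter U₁' U₂' (mu U₁ U₂ x b) = letter U₁ U₂ b := by
  obtain ⟨a, ha⟩ := letter_eq_some hb.1
  obtain ⟨i, j⟩ := b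
  obtain ⟨j, rfl⟩ : ∃ j', j = j' + 1 := ⟨j - 1, by have := hb.1.2.1; simp only at this; omega⟩
  have h₂ : 2 ≤ expandPos x (word U₁ U₂ i) (j + 1) := W.two_le_expandPos hb
  rw [ha]
  exact (W.letter_new (by simp only [expandPos] at h₂ ⊢; omega)).trans
    (getElem?_expand_expandPos_succ_sub_one ha)

lemma letter_pred_mu (hd : IsLaterOcc U₁ U₂ x d) :
    letter U₁' U₂' (pred (mu U₁ U₂ x d)) = some y := by
  have h₂ := W.two_le_of_isLaterOcc hd
  obtain ⟨i, j⟩ := d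
  obtain ⟨j, rfl⟩ : ∃ j', j = j' + 1 := ⟨j - 1, by simp only at h₂; omega⟩
  have hx : (word U₁ U₂ i)[j]? = some x := hd.2.1
  have h₁ : 1 ≤ expandPos x (word U₁ U₂ i) j := by simp only [expandPos] at h₂ ⊢; omega
  change letter U₁' U₂' (i, (pred (mu U₁ U₂ x (i, j + 1))).2) = some y
  rw [snd_pred_mu_of_getElem? hx, W.letter_new h₁]
  exact getElem?_expand_expandPos hx

/-- `pred (μ d)` is the new boundary right after the `y` inserted in front of the occurrence `d`
of `x`. -/
lemma nu_cases (hb' : Boundary U₁' U₂' b') :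
    (Bminus U₁ U₂ (nu U₁' U₂' x b') ∧ mu U₁ U₂ x (nu U₁' U₂' x b') = b') ∨
    (IsLaterOcc U₁ U₂ x (nu U₁' U₂' x b') ∧ pred (mu U₁ U₂ x (nu U₁' U₂' x b')) = b') := by
  obtain ⟨i, m⟩ := b'
  obtain ⟨hi, hm₁, hm₂⟩ := hb'
  simp only at hi hm₁ hm₂
  have hlen := W.length_new i
  obtain ⟨j, hj, hlt, hle⟩ := exists_expandPos_lt_le (x := x) (y := y) (l := word U₁ U₂ i)
    (k := m + 1) (by omega) (by rw [← expandPos_length]; omega)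
  obtain ⟨a, ha⟩ : ∃ a, (word U₁ U₂ i)[j]? = some a := ⟨_, List.getElem?_eq_getElem hj⟩
  have hstep := expandPos_succ (x := x) ha
  have hB : Boundary U₁ U₂ (i, j + 1) := ⟨hi, by simp, hj⟩
  by_cases hend : m + 1 = expandPos x (word U₁ U₂ i) (j + 1)
  · have hmu : mu U₁ U₂ x (i, j + 1) = (i, m) := Prod.ext rfl (by rw [snd_mu]; simp only; omega)
    left
    rw [← hmu, W.nu_mu hB]
    refine ⟨⟨hB, ?_⟩, rfl⟩
    rintro ⟨⟩
    rw [if_neg (Option.some_injective _ (ha.symm.trans W.letter_two_one) ▸ W.ne)] at hstep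
    rw [expandPos_zero] at hstep
    omega
  · have hax : a = x := by
      by_contra h
      rw [if_neg h] at hstep
      omega
    rw [if_pos hax] at hstep
    rw [hax] at ha
    have hd : IsLaterOcc U₁ U₂ x (i, j + 1) := ⟨hB, ha, by
      rintro ⟨⟩
      rw [expandPos_zero] at hstep
      omega⟩
    have hpm : pred (mu U₁ U₂ x (i, j + 1)) = (i, m) :=
      Prod.ext rfl (by rw [snd_pred_mu_of_getElem? ha]; omega)
    right
    rw [← hpm, W.nu_pred_mu hd]
    exact ⟨hd, rfl⟩

lemma bminus_nu (hb' : Boundary U₁' U₂' b') : Bminus U₁ U₂ (nu U₁' U₂' x b') := by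
  rcases W.nu_cases hb' with ⟨h, -⟩ | ⟨h, -⟩
  exacts [h, W.bminus_of_isLaterOcc h]

lemma isLaterOcc_nu_of_not_bpminus (hb' : Boundary U₁' U₂' b') (h : ¬ Bpminus U₁ U₂ x b') :
    IsLaterOcc U₁ U₂ x (nu U₁' U₂' x b') ∧ pred (mu U₁ U₂ x (nu U₁' U₂' x b')) = b' :=
  (W.nu_cases hb').resolve_left fun ⟨hb, hmu⟩ => h ⟨_, hb, hmu⟩

lemma snd_mu_pred_nu_le (hb' : Boundary U₁' U₂' b') :
    (mu U₁ U₂ x (pred (nu U₁' U₂' x b'))).2 ≤ (pred b').2 := by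
  rcases W.nu_cases hb' with ⟨hb, hmu⟩ | ⟨hd, hpm⟩
  · generalize nu U₁' U₂' x b' = bb at hb hmu ⊢
    subst hmu
    obtain ⟨i, j⟩ := bb
    obtain ⟨j, rfl⟩ : ∃ j', j = j' + 1 := ⟨j - 1, by have := hb.1.2.1; simp only at this; omega⟩
    have := expandPos_strictMono (x := x) (l := word U₁ U₂ i) (Nat.lt_add_one j)
    simp only [pred, snd_mu, Nat.add_sub_cancel]
    omega
  · generalize nu U₁' U₂' x b' = d at hd hpm ⊢
    subst hpm
    obtain ⟨i, j⟩ := d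
    obtain ⟨j, rfl⟩ : ∃ j', j = j' + 1 := ⟨j - 1, by have := hd.1.2.1; simp only at this; omega⟩
    have h := snd_pred_mu_of_getElem? (U₂ := U₂) hd.2.1
    simp only [pred, snd_mu, Nat.add_sub_cancel] at h ⊢
    omega

lemma snd_le_snd_mu_nu (hb' : Boundary U₁' U₂' b') :
    b'.2 ≤ (mu U₁ U₂ x (nu U₁' U₂' x b')).2 := by
  rcases W.nu_cases hb' with ⟨-, hmu⟩ | ⟨-, hpm⟩
  · rw [hmu]
  · conv_lhs => rw [← hpm]
    exact Nat.sub_le _ _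

lemma eq_or_eq_pred_of_nu_eq (hb' : Boundary U₁' U₂' b') (hc' : Boundary U₁' U₂' c')
    (h : nu U₁' U₂' x b' = nu U₁' U₂' x c') : b' = c' ∨ b' = pred c' ∨ c' = pred b' := by
  rcases W.nu_cases hb' with ⟨-, hb⟩ | ⟨-, hb⟩ <;> rcases W.nu_cases hc' with ⟨-, hc⟩ | ⟨-, hc⟩ <;>
    rw [h] at hb <;> generalize nu U₁' U₂' x c' = bb at hb hc <;> subst hb hc <;> simp

lemma eq_of_nu_eq_of_letter_eq (hb' : Boundary U₁' U₂' b') (hc' : Boundary U₁' U₂' c')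
    (h : nu U₁' U₂' x b' = nu U₁' U₂' x c') (hl : letter U₁' U₂' b' = letter U₁' U₂' c') :
    b' = c' := by
  have hxy : some x ≠ some y := fun h => W.ne (Option.some_injective _ h).symm
  rcases W.nu_cases hb' with ⟨hb, eb⟩ | ⟨hb, eb⟩ <;>
    rcases W.nu_cases hc' with ⟨hc, ec⟩ | ⟨hc, ec⟩ <;> rw [h] at hb eb <;>
    generalize nu U₁' U₂' x c' = bb at hb eb hc ec <;> subst eb ec
  · rfl
  · rw [W.letter_mu hb, W.letter_pred_mu hc, hc.2.1] at hl
    exact absurd hl hxy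
  · rw [W.letter_mu hc, W.letter_pred_mu hb, hb.2.1] at hl
    exact absurd hl.symm hxy
  · rfl

lemma injOn_nu_mirrorSet {lt' : BRel} :
    Set.InjOn (nu U₁' U₂' x) (mirrorSet U₁' U₂' lt' c') := fun d₁ h₁ d₂ h₂ h => by
  have h₁ := mem_mirrorSet.1 h₁
  have h₂ := mem_mirrorSet.1 h₂
  exact W.eq_of_nu_eq_of_letter_eq h₁.2.1 h₂.2.1 h (h₁.2.2.1.symm.trans h₂.2.2.1)

end NielsenIIWords

end NielsenIIWords

section NielsenIIData

variable [DecidableEq X] {U₁ U₂ U₁' U₂' : List X} {lt lt' : BRel} {x y : X} {L L' : X → ℕ}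
  {b c d b' c' : ℕ × ℕ}

/-- The last field is the form in which the matching of `<'` with `<` through `ν` is used. -/
structure NielsenIIData (U₁ U₂ U₁' U₂' : List X) (lt lt' : BRel) (x y : X) (L L' : X → ℕ) : Prop
    extends NielsenIIWords U₁ U₂ U₁' U₂' x y where
  pos : ∀ z, 0 < L z
  len_lt : L y < L x
  realized : IsRealizedBy U₁ U₂ lt L
  realized' : IsRealizedBy U₁' U₂' lt' L'
  prefixLen_mu_lt_iff : ∀ b c, Bminus U₁ U₂ b → Bminus U₁ U₂ c →
    (prefixLen U₁' U₂' L' (mu U₁ U₂ x b) < prefixLen U₁' U₂' L' (mu U₁ U₂ x c) ↔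
      prefixLen U₁ U₂ L b < prefixLen U₁ U₂ L c)

lemma NielsenIIxy.exists_nielsenIIData (hII : NielsenIIxy U₁ U₂ lt U₁' U₂' lt' x y)
    (hbo : BoundaryOrder U₁ U₂ lt) (hcoh : Coherent U₁ U₂ lt) (hcoh' : Coherent U₁' U₂' lt') :
    ∃ L L', NielsenIIData U₁ U₂ U₁' U₂' lt lt' x y L L' := by
  obtain ⟨hx, hy, hlt, hU₁', hU₂', hbo', hmatch⟩ := hII
  obtain ⟨L, hL, hr⟩ := hbo.exists_isRealizedBy hcoh
  obtain ⟨L', -, hr'⟩ := hbo'.exists_isRealizedBy hcoh'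
  obtain ⟨t₁, rfl⟩ := List.head?_eq_some_iff.mp hx
  obtain ⟨t₂, rfl⟩ := List.head?_eq_some_iff.mp hy
  have hx₁ : letter (x :: t₁) (y :: t₂) (1, 1) = some x := rfl
  have hy₁ : letter (x :: t₁) (y :: t₂) (2, 1) = some y := rfl
  have hb₁ : Boundary (x :: t₁) (y :: t₂) (1, 1) := ⟨Or.inl rfl, le_rfl, by simp [word]⟩
  have hb₂ : Boundary (x :: t₁) (y :: t₂) (2, 1) := ⟨Or.inr rfl, le_rfl, by simp [word]⟩
  have hyx : L y < L x := by
    simpa [prefixLen_one hx₁, prefixLen_one hy₁] using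
      (hr _ _ hb₂.eBoundary hb₁.eBoundary).1 hlt
  have W : NielsenIIWords (x :: t₁) (y :: t₂) U₁' U₂' x y :=
    { ne := fun h => (h ▸ hyx).false
      letter_one_one := hx₁
      letter_two_one := hy₁
      expand_word := fun i => by
        by_cases hi : i = 1 <;> simp only [word, hi, if_true, if_false]
        · rw [hU₁']; exact (List.cons_head?_tail (head?_expand_cons (Or.inl rfl) t₁)).symm
        · rw [hU₂']; exact (List.cons_head?_tail (head?_expand_cons (Or.inr rfl) t₂)).symm }
  refine ⟨L, L', W, hL, hyx, hr, hr', fun b c hb hc => ?_⟩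
  have := hmatch _ _ ⟨b, hb, rfl⟩ ⟨c, hc, rfl⟩
  rwa [W.nu_mu hb.1, W.nu_mu hc.1, hr' _ _ (W.boundary_mu hb).eBoundary
    (W.boundary_mu hc).eBoundary, hr _ _ hb.1.eBoundary hc.1.eBoundary] at this

namespace NielsenIIData

variable (S : NielsenIIData U₁ U₂ U₁' U₂' lt lt' x y L L')
include S

lemma prefixLen_two_one_lt (hb : Bminus U₁ U₂ b) :
    prefixLen U₁ U₂ L (2, 1) < prefixLen U₁ U₂ L b := by
  rw [prefixLen_one S.letter_two_one]
  obtain ⟨⟨hi, hj, hjl⟩, hne⟩ := hb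
  obtain ⟨i, j⟩ := b
  simp only at hi hj hjl
  rcases hi with rfl | rfl
  · have := prefixLen_mono (U₁ := U₁) (U₂ := U₂) (L := L) (a := (1, 1)) (b := (1, j)) rfl hj
    have := S.len_lt
    rw [prefixLen_one S.letter_one_one] at *
    omega
  · obtain ⟨z, hz⟩ := letter_eq_some (b := (2, j)) ⟨Or.inr rfl, hj, hjl⟩
    have hj2 : 2 ≤ j := by by_contra h; exact hne (by congr; omega)
    have := prefixLen_mono (U₁ := U₁) (U₂ := U₂) (L := L) (a := (2, 1)) (b := pred (2, j)) rfl
      (by simp only [pred]; omega)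
    rw [prefixLen_one S.letter_two_one] at this
    rw [prefixLen_eq_pred_add hj hz]
    have := S.pos z
    omega

lemma prefixLen_one_one_lt (hd : IsLaterOcc U₁ U₂ x d) :
    prefixLen U₁ U₂ L (1, 1) < prefixLen U₁ U₂ L d := by
  have h₂ := S.two_le_of_isLaterOcc hd
  have hpred : Boundary U₁ U₂ (pred d) :=
    hd.1.boundary_pred_or.resolve_right (by simp only [pred]; omega)
  rw [prefixLen_one S.letter_one_one, prefixLen_eq_pred_add hd.1.2.1 hd.2.1]
  have := prefixLen_pos S.pos hpred
  omega

lemma prefixLen_mu_eq_iff (hb : Bminus U₁ U₂ b) (hc : Bminus U₁ U₂ c) :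
    prefixLen U₁' U₂' L' (mu U₁ U₂ x b) = prefixLen U₁' U₂' L' (mu U₁ U₂ x c) ↔
      prefixLen U₁ U₂ L b = prefixLen U₁ U₂ L c := by
  have h₁ := S.prefixLen_mu_lt_iff b c hb hc
  have h₂ := S.prefixLen_mu_lt_iff c b hc hb
  omega

lemma prefixLen_pred_lt_of_prefixLen_mu_lt (hb : Boundary U₁ U₂ b) (hc : Bminus U₁ U₂ c)
    (h : prefixLen U₁' U₂' L' (mu U₁ U₂ x (pred b)) < prefixLen U₁' U₂' L' (mu U₁ U₂ x c)) :
    prefixLen U₁ U₂ L (pred b) < prefixLen U₁ U₂ L c := by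
  rcases hb.boundary_pred_or with hp | hp
  · by_cases h₂₁ : pred b = (2, 1)
    · exact h₂₁ ▸ S.prefixLen_two_one_lt hc
    · exact (S.prefixLen_mu_lt_iff _ _ ⟨hp, h₂₁⟩ hc).1 h
  · rw [show pred b = ((pred b).1, 0) from Prod.ext rfl hp, prefixLen_zero]
    exact prefixLen_pos S.pos hc.1

/-- Each new boundary `b'` lies in the interval `(μ (pred (ν b')), μ (ν b')]` of new positions,
so overlapping new intervals come from overlapping old ones. -/
lemma cuts_nu (h : Cuts U₁' U₂' lt' b' c') :
    Cuts U₁ U₂ lt (nu U₁' U₂' x b') (nu U₁' U₂' x c') := by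
  obtain ⟨hb', hc', hne, h₁, h₂⟩ := S.realized'.cuts_iff.1 h
  have hb := S.bminus_nu hb'
  have hc := S.bminus_nu hc'
  have lower (e' : ℕ × ℕ) (he : Boundary U₁' U₂' e') :
      prefixLen U₁' U₂' L' (mu U₁ U₂ x (pred (nu U₁' U₂' x e'))) ≤ prefixLen U₁' U₂' L' (pred e') :=
    prefixLen_mono rfl (S.snd_mu_pred_nu_le he)
  have upper (e' : ℕ × ℕ) (he : Boundary U₁' U₂' e') :
      prefixLen U₁' U₂' L' e' ≤ prefixLen U₁' U₂' L' (mu U₁ U₂ x (nu U₁' U₂' x e')) :=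
    prefixLen_mono rfl (S.snd_le_snd_mu_nu he)
  refine S.realized.cuts_iff.2 ⟨hb.1, hc.1, fun heq => ?_,
    S.prefixLen_pred_lt_of_prefixLen_mu_lt hb.1 hc
      ((lower b' hb').trans_lt (h₁.trans_le (upper c' hc'))),
    S.prefixLen_pred_lt_of_prefixLen_mu_lt hc.1 hb
      ((lower c' hc').trans_lt (h₂.trans_le (upper b' hb')))⟩
  rcases S.eq_or_eq_pred_of_nu_eq hb' hc' heq with rfl | rfl | rfl
  exacts [hne rfl, h₂.false, h₁.false]

lemma mirrors_of_mirrors_mu (hb : Bminus U₁ U₂ b) (hc : Bminus U₁ U₂ c)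
    (h : Mirrors U₁' U₂' lt' (mu U₁ U₂ x b) (mu U₁ U₂ x c)) : Mirrors U₁ U₂ lt b c := by
  obtain ⟨-, -, hl, hne⟩ := S.realized'.mirrors_iff.1 h
  rw [S.letter_mu hb, S.letter_mu hc] at hl
  exact S.realized.mirrors_iff.2 ⟨hb.1, hc.1, hl, (S.prefixLen_mu_eq_iff hb hc).not.1 hne⟩

lemma prefixLen_mu_eq_pred_add (hd : IsLaterOcc U₁ U₂ x d) :
    prefixLen U₁' U₂' L' (mu U₁ U₂ x d) =
      prefixLen U₁' U₂' L' (pred (mu U₁ U₂ x d)) + L' x := by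
  have hb := S.bminus_of_isLaterOcc hd
  exact prefixLen_eq_pred_add (S.boundary_mu hb).2.1 ((S.letter_mu hb).trans hd.2.1)

lemma mirrors_of_mirrors_pred_mu (hb : IsLaterOcc U₁ U₂ x b) (hc : IsLaterOcc U₁ U₂ x c)
    (h : Mirrors U₁' U₂' lt' (pred (mu U₁ U₂ x b)) (pred (mu U₁ U₂ x c))) :
    Mirrors U₁ U₂ lt b c := by
  obtain ⟨-, -, -, hne⟩ := S.realized'.mirrors_iff.1 h
  have hmu : prefixLen U₁' U₂' L' (mu U₁ U₂ x b) ≠ prefixLen U₁' U₂' L' (mu U₁ U₂ x c) := by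
    rw [S.prefixLen_mu_eq_pred_add hb, S.prefixLen_mu_eq_pred_add hc]
    omega
  exact S.realized.mirrors_iff.2 ⟨hb.1, hc.1, hb.2.1.trans hc.2.1.symm,
    (S.prefixLen_mu_eq_iff (S.bminus_of_isLaterOcc hb) (S.bminus_of_isLaterOcc hc)).not.1 hmu⟩

lemma mirrors_two_one (hb : Bminus U₁ U₂ b) (hy : letter U₁ U₂ b = some y) :
    Mirrors U₁ U₂ lt (2, 1) b :=
  S.realized.mirrors_iff.2 ⟨S.boundary_two_one, hb.1,
    S.letter_two_one.trans hy.symm, (S.prefixLen_two_one_lt hb).ne⟩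

lemma mirrors_one_one (hd : IsLaterOcc U₁ U₂ x d) : Mirrors U₁ U₂ lt (1, 1) d :=
  S.realized.mirrors_iff.2 ⟨S.boundary_one_one, hd.1, S.letter_one_one.trans hd.2.1.symm,
    (S.prefixLen_one_one_lt hd).ne⟩

lemma cuts_one_one_two_one : Cuts U₁ U₂ lt (1, 1) (2, 1) := by
  refine S.realized.cuts_iff.2 ⟨S.boundary_one_one, S.boundary_two_one, by simp, ?_, ?_⟩ <;>
    simp only [pred, Nat.sub_self, prefixLen_zero]
  exacts [prefixLen_pos S.pos S.boundary_two_one, prefixLen_pos S.pos S.boundary_one_one]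

variable {f f' : ℕ × ℕ → ℕ}

/-- A new mirror of `μ c` that is not a `μ`-image carries `y`; then `(2,1)` mirrors `c`, and it
cuts `(1,1)`, whose mirrors are the later occurrences of `x`. -/
lemma sum_image_nu_mirrorSet_mu_le (hf : IsFecundity U₁ U₂ lt f) (hc : Bminus U₁ U₂ c) :
    ((mirrorSet U₁' U₂' lt' (mu U₁ U₂ x c)).image (nu U₁' U₂' x)).sum f ≤
      (mirrorSet U₁ U₂ lt c).sum f := by
  have key : ∀ e ∈ (mirrorSet U₁' U₂' lt' (mu U₁ U₂ x c)).image (nu U₁' U₂' x),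
      e ∈ (mirrorSet U₁ U₂ lt c).erase (2, 1) ∨
        IsLaterOcc U₁ U₂ x e ∧ letter U₁ U₂ c = some y := by
    simp only [Finset.mem_image, mem_mirrorSet]
    rintro _ ⟨d', hd', rfl⟩
    rcases S.nu_cases hd'.2.1 with ⟨hd, hmu⟩ | ⟨hd, hpm⟩
    · rw [← hmu] at hd'
      exact Or.inl (Finset.mem_erase.2 ⟨hd.2, mem_mirrorSet.2 (S.mirrors_of_mirrors_mu hc hd hd')⟩)
    · exact Or.inr ⟨hd, by rw [← S.letter_mu hc, hd'.2.2.1, ← hpm, S.letter_pred_mu hd]⟩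
  by_cases hy : letter U₁ U₂ c = some y
  · refine sum_le_sum_of_subset_erase_union (u := mirrorSet U₁ U₂ lt (1, 1)) (fun e he => ?_)
      (mem_mirrorSet.2 (S.mirrors_two_one hc hy).symm)
      (hf.sum_mirrorSet_lt S.cuts_one_one_two_one.symm).le
    rcases key e he with h | ⟨h, -⟩
    exacts [Finset.mem_union_left _ h,
      Finset.mem_union_right _ (mem_mirrorSet.2 (S.mirrors_one_one h))]
  · refine Finset.sum_le_sum_of_subset fun e he => ?_
    rcases key e he with h | ⟨-, h⟩
    exacts [Finset.mem_of_mem_erase h, absurd h hy]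

/-- The new mirrors of `pred (μ c)` carry `y`: those that are `μ`-images come from mirrors of
`(2,1)`, which `(1,1)` cuts, and `(1,1)` mirrors `c`. -/
lemma sum_image_nu_mirrorSet_pred_mu_le (hf : IsFecundity U₁ U₂ lt f)
    (hc : IsLaterOcc U₁ U₂ x c) :
    ((mirrorSet U₁' U₂' lt' (pred (mu U₁ U₂ x c))).image (nu U₁' U₂' x)).sum f ≤
      (mirrorSet U₁ U₂ lt c).sum f := by
  refine sum_le_sum_of_subset_erase_union (u := mirrorSet U₁ U₂ lt (2, 1)) ?_
    (mem_mirrorSet.2 (S.mirrors_one_one hc).symm) (hf.sum_mirrorSet_lt S.cuts_one_one_two_one).le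
  intro e he
  obtain ⟨d', hd', rfl⟩ := Finset.mem_image.1 he
  have hd' := mem_mirrorSet.1 hd'
  rcases S.nu_cases hd'.2.1 with ⟨hd, hmu⟩ | ⟨hd, hpm⟩
  · refine Finset.mem_union_right _ (mem_mirrorSet.2 (S.mirrors_two_one hd ?_))
    rw [← S.letter_mu hd, hmu, ← hd'.2.2.1, S.letter_pred_mu hc]
  · rw [← hpm] at hd'
    exact Finset.mem_union_left _ (Finset.mem_erase.2
      ⟨hd.2.2, mem_mirrorSet.2 (S.mirrors_of_mirrors_pred_mu hc hd hd')⟩)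

lemma sum_image_nu_mirrorSet_le (hf : IsFecundity U₁ U₂ lt f) (hc' : Boundary U₁' U₂' c') :
    ((mirrorSet U₁' U₂' lt' c').image (nu U₁' U₂' x)).sum f ≤
      (mirrorSet U₁ U₂ lt (nu U₁' U₂' x c')).sum f := by
  rcases S.nu_cases hc' with ⟨hc, hmu⟩ | ⟨hc, hpm⟩
  · simpa only [hmu] using S.sum_image_nu_mirrorSet_mu_le hf hc
  · simpa only [hpm] using S.sum_image_nu_mirrorSet_pred_mu_le hf hc

theorem fecundity_le_nu (hf : IsFecundity U₁ U₂ lt f) (hf' : IsFecundity U₁' U₂' lt' f')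
    (hb' : Boundary U₁' U₂' b') : f' b' ≤ f (nu U₁' U₂' x b') := by
  induction hn : f' b' using Nat.strong_induction_on generalizing b' with
  | _ n ih =>
  subst hn
  rw [hf'.eq hb', hf.eq (S.bminus_nu hb').1]
  refine Nat.add_le_add_left (Finset.sup_le fun c' hc' => ?_) 1
  have hcut := mem_cutSet.1 hc'
  calc (mirrorSet U₁' U₂' lt' c').sum f'
      ≤ (mirrorSet U₁' U₂' lt' c').sum fun d' => f (nu U₁' U₂' x d') :=
        Finset.sum_le_sum fun d' hd' => ih _ ((Finset.single_le_sum (fun _ _ => Nat.zero_le _)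
          hd').trans_lt (hf'.sum_mirrorSet_lt hcut)) (mem_mirrorSet.1 hd').2.1 rfl
    _ = ((mirrorSet U₁' U₂' lt' c').image (nu U₁' U₂' x)).sum f :=
        (Finset.sum_image S.injOn_nu_mirrorSet).symm
    _ ≤ (mirrorSet U₁ U₂ lt (nu U₁' U₂' x c')).sum f := S.sum_image_nu_mirrorSet_le hf hcut.2.1
    _ ≤ _ := Finset.le_sup (f := fun c => (mirrorSet U₁ U₂ lt c).sum f)
        (mem_cutSet.2 (S.cuts_nu hcut))

end NielsenIIData

end NielsenIIData

section

variable [DecidableEq X]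

theorem fecundity_sum_Bpplus_lt_general (U₁ U₂ U₁' U₂' : List X) (lt lt' : BRel) (x y : X)
    (hbo : BoundaryOrder U₁ U₂ lt)
    (hcoh : Coherent U₁ U₂ lt)
    (hII : NielsenIIxy U₁ U₂ lt U₁' U₂' lt' x y) (hcoh' : Coherent U₁' U₂' lt')
    (f f' : ℕ × ℕ → ℕ)
    (hf : IsFecundity U₁ U₂ lt f) (hf' : IsFecundity U₁' U₂' lt' f') :
    (((boundaryFinset U₁' U₂').filter fun b => ¬ Bpminus U₁ U₂ x b).sum f')
      < f (2, 1) := by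
  obtain ⟨L, L', S⟩ := hII.exists_nielsenIIData hbo hcoh hcoh'
  set B := (boundaryFinset U₁' U₂').filter fun b => ¬ Bpminus U₁ U₂ x b
  have hB : ∀ b' ∈ B, Boundary U₁' U₂' b' ∧ IsLaterOcc U₁ U₂ x (nu U₁' U₂' x b') ∧
      letter U₁' U₂' b' = some y := by
    intro b' hb'
    obtain ⟨hmem, hnot⟩ := Finset.mem_filter.1 hb'
    have hb' := mem_boundaryFinset.1 hmem
    obtain ⟨hd, hpm⟩ := S.isLaterOcc_nu_of_not_bpminus hb' hnot
    exact ⟨hb', hd, hpm ▸ S.letter_pred_mu hd⟩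
  calc B.sum f' ≤ B.sum fun b' => f (nu U₁' U₂' x b') :=
        Finset.sum_le_sum fun b' hb' => S.fecundity_le_nu hf hf' (hB b' hb').1
    _ = (B.image (nu U₁' U₂' x)).sum f := (Finset.sum_image fun b₁ h₁ b₂ h₂ h =>
        S.eq_of_nu_eq_of_letter_eq (hB b₁ h₁).1 (hB b₂ h₂).1 h
          ((hB b₁ h₁).2.2.trans (hB b₂ h₂).2.2.symm)).symm
    _ ≤ (mirrorSet U₁ U₂ lt (1, 1)).sum f := Finset.sum_le_sum_of_subset fun e he => by
        obtain ⟨b', hb', rfl⟩ := Finset.mem_image.1 he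
        exact mem_mirrorSet.2 (S.mirrors_one_one (hB b' hb').2.1)
    _ < f (2, 1) := hf.sum_mirrorSet_lt S.cuts_one_one_two_one.symm

/-- **Lemma.** After a case II coherent extended Nielsen transformation of an
extended word equation with acyclic cut graph, the sum of the fecundities of the
new boundaries in `B'⁺` is strictly less than the fecundity of `(2,1)`. -/
theorem fecundity_sum_Bpplus_lt (U₁ U₂ U₁' U₂' : List X) (lt lt' : BRel) (x y : X)
    (h₁ : U₁ ≠ []) (h₂ : U₂ ≠ []) (hbo : BoundaryOrder U₁ U₂ lt)
    (hcoh : Coherent U₁ U₂ lt)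
    (hII : NielsenIIxy U₁ U₂ lt U₁' U₂' lt' x y) (hcoh' : Coherent U₁' U₂' lt')
    (hacyc : Acyclic U₁ U₂ lt)
    (f f' : ℕ × ℕ → ℕ)
    (hf : IsFecundity U₁ U₂ lt f) (hf' : IsFecundity U₁' U₂' lt' f') :
    (((boundaryFinset U₁' U₂').filter fun b => ¬ Bpminus U₁ U₂ x b).sum f')
      < f (2, 1) :=
  fecundity_sum_Bpplus_lt_general U₁ U₂ U₁' U₂' lt lt' x y hbo hcoh hII hcoh' f f' hf hf'

end

end ExtWordEq
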